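/- Let K ⊆ ℝ^n be a convex body, let L ⊆ ℝ^n be a full-rank lattice with dual lattice L*, and let f > 0. Assume the flatness bound: for every convex body C ⊆ ℝ^n, if λ₁((C-C)*, L*) ≥ f then C ∩ L ≠ ∅. Let y ∈ L* ∖ {0} satisfy ‖y‖_{(K-K)*} ≤ λ₁((K-K)*, L*) + 1. Then, if K ∩ L ≠ ∅, there exists x ∈ K ∩ L with ⟨y, x⟩ ≤ inf_{z ∈ K} ⟨y, z⟩ + f + 1. -/

import Mathlib

open MeasureTheory Pointwise
open scoped ENNReal RealInnerProductSpace

noncomputable section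

abbrev Euc (n : ℕ) := EuclideanSpace ℝ (Fin n)

/-- A convex body: a compact convex set with nonempty interior. -/
def IsConvexBody {n : ℕ} (K : Set (Euc n)) : Prop :=
  Convex ℝ K ∧ IsCompact K ∧ (interior K).Nonempty

/-- The polar body `K* = {x : ⟨x,y⟩ ≤ 1 for all y ∈ K}`. -/
def polarBody {n : ℕ} (K : Set (Euc n)) : Set (Euc n) :=
  {x | ∀ y ∈ K, ⟪x, y⟫ ≤ 1}

/-- `λ₁(K, S)`: the infimum of the gauge (Minkowski functional) of `K`
over the nonzero points of `S`. -/
def lambdaOne {n : ℕ} (K : Set (Euc n)) (S : Set (Euc n)) : ℝ :=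
  sInf (gauge K '' (S \ {0}))

/-- The dual lattice `L* = {y : ⟨x,y⟩ ∈ ℤ for all x ∈ L}`. -/
def dualLattice {n : ℕ} (L : AddSubgroup (Euc n)) : Set (Euc n) :=
  {y | ∀ x ∈ L, ∃ m : ℤ, ⟪x, y⟫ = (m : ℝ)}

/-! Write `m` and `m + W` for the minimum and maximum of `⟪y, ·⟫` on `K`, and suppose `W > f + 1`
(otherwise any lattice point of `K` works). The homothety of ratio `s = (f + 1) / W` centred at a
minimiser maps `K` into the truncated body `C = K ∩ {⟪y, ·⟫ ≤ m + f + 1}`, so every width of `C` is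
at least `s` times the corresponding width of `K`. Since `y` is a nearly shortest dual vector, all
dual widths of `K` are at least `W - 1`, hence all dual widths of `C` are at least
`s (W - 1) = f + 1 - s ≥ f`, and the flatness bound puts a lattice point in `C`. -/

open Set Bornology AffineMap Topology

section Polar

variable {n : ℕ} {S T Λ : Set (Euc n)} {w u : Euc n} {r s : ℝ}

lemma polarBody_mem_nhds_zero (hS : IsBounded S) : polarBody S ∈ 𝓝 (0 : Euc n) := by
  obtain ⟨R, hR0, hR⟩ := hS.exists_pos_norm_le
  refine Metric.mem_nhds_iff.2 ⟨R⁻¹, inv_pos.2 hR0, fun x hx u hu => ?_⟩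
  rw [mem_ball_zero_iff] at hx
  calc ⟪x, u⟫ ≤ ‖x‖ * ‖u‖ := real_inner_le_norm x u
    _ ≤ R⁻¹ * R := mul_le_mul hx.le (hR u hu) (norm_nonneg _) (inv_pos.2 hR0).le
    _ = 1 := inv_mul_cancel₀ hR0.ne'

lemma mem_smul_polarBody_iff (hr : 0 < r) : w ∈ r • polarBody S ↔ ∀ u ∈ S, ⟪w, u⟫ ≤ r := by
  simp only [mem_smul_set_iff_inv_smul_mem₀ hr.ne', polarBody, mem_ofPred_eq, real_inner_smul_left,
    inv_mul_le_iff₀ hr, mul_one]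

lemma gauge_polarBody_le (hr : 0 < r) (h : ∀ u ∈ S, ⟪w, u⟫ ≤ r) : gauge (polarBody S) w ≤ r :=
  gauge_le_of_mem hr.le ((mem_smul_polarBody_iff hr).2 h)

lemma inner_le_gauge_polarBody (hS : IsBounded S) (hu : u ∈ S) :
    ⟪w, u⟫ ≤ gauge (polarBody S) w := by
  by_contra! hlt
  obtain ⟨r, hr, hru, hw⟩ :=
    exists_lt_of_gauge_lt (absorbent_nhds_zero (polarBody_mem_nhds_zero hS)) hlt
  exact hru.not_ge ((mem_smul_polarBody_iff hr).1 hw u hu)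

lemma mul_gauge_polarBody_le (hs : 0 < s) (hST : s • S ⊆ T) (hT : IsBounded T) :
    s * gauge (polarBody S) w ≤ gauge (polarBody T) w := by
  refine le_of_forall_gt_imp_ge_of_dense fun r hr => ?_
  obtain ⟨r', hr', hr'r, hw⟩ :=
    exists_lt_of_gauge_lt (absorbent_nhds_zero (polarBody_mem_nhds_zero hT)) hr
  rw [← le_div_iff₀' hs]
  refine (gauge_polarBody_le (div_pos hr' hs) fun u hu => ?_).trans (by gcongr)
  have hsu := (mem_smul_polarBody_iff hr').1 hw (s • u) (hST (smul_mem_smul_set hu))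
  rwa [real_inner_smul_right, ← le_div_iff₀' hs] at hsu

lemma lambdaOne_le_gauge {K : Set (Euc n)} (hw : w ∈ Λ \ {0}) : lambdaOne K Λ ≤ gauge K w :=
  csInf_le ⟨0, by rintro _ ⟨v, -, rfl⟩; exact gauge_nonneg v⟩ (mem_image_of_mem _ hw)

lemma mul_lambdaOne_polarBody_le (hs : 0 < s) (hST : s • S ⊆ T) (hT : IsBounded T)
    (hΛ : (Λ \ {0}).Nonempty) :
    s * lambdaOne (polarBody S) Λ ≤ lambdaOne (polarBody T) Λ := by
  refine le_csInf (hΛ.image _) ?_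
  rintro _ ⟨w, hw, rfl⟩
  exact (mul_le_mul_of_nonneg_left (lambdaOne_le_gauge hw) hs.le).trans
    (mul_gauge_polarBody_le hs hST hT)

end Polar

section Homothety

variable {E : Type*} {K : Set E} {z : E} {s : ℝ}

lemma smul_sub_subset_image_homothety_sub [AddCommGroup E] [Module ℝ E] :
    s • (K - K) ⊆ homothety z s '' K - homothety z s '' K := by
  rintro _ ⟨_, ⟨a, ha, b, hb, rfl⟩, rfl⟩
  exact ⟨_, mem_image_of_mem _ ha, _, mem_image_of_mem _ hb, by
    simp only [homothety_apply, vsub_eq_sub, vadd_eq_add, smul_sub]; abel⟩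

lemma image_homothety_subset_inter_halfSpace [NormedAddCommGroup E] [InnerProductSpace ℝ E]
    {y : E} {W : ℝ} (hK : Convex ℝ K) (hz : z ∈ K) (hs : s ∈ Icc (0 : ℝ) 1)
    (hW : ∀ a ∈ K, ⟪y, a - z⟫ ≤ W) :
    homothety z s '' K ⊆ K ∩ {x | ⟪y, x⟫ ≤ ⟪y, z⟫ + s * W} := by
  rintro _ ⟨a, ha, rfl⟩
  refine ⟨homothety_eq_lineMap z s a ▸ hK.lineMap_mem hz ha hs, ?_⟩
  simp only [mem_ofPred_eq, homothety_apply, vsub_eq_sub, vadd_eq_add, inner_add_right,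
    real_inner_smul_right]
  nlinarith [hW a ha, hs.1]

end Homothety

lemma IsConvexBody.inter_halfSpace_le {n : ℕ} {K : Set (Euc n)} {y z : Euc n} {s W : ℝ}
    (hK : IsConvexBody K) (hz : z ∈ K) (hs : s ∈ Ioc (0 : ℝ) 1) (hW : ∀ a ∈ K, ⟪y, a - z⟫ ≤ W) :
    IsConvexBody (K ∩ {x | ⟪y, x⟫ ≤ ⟪y, z⟫ + s * W}) := by
  have hKC := image_homothety_subset_inter_halfSpace hK.1 hz (Ioc_subset_Icc_self hs) hW
  refine ⟨hK.1.inter (convex_halfSpace_le (innerₛₗ ℝ y).isLinear _),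
    hK.2.1.inter_right (isClosed_le (by fun_prop) continuous_const), ?_⟩
  exact ((hK.2.2.image _).mono ((homothety_isOpenMap z s hs.1.ne').image_interior_subset K)).mono
    (interior_mono hKC)

theorem exists_lattice_point_in_slab_of_flatness_general
    {n : ℕ} (K : Set (Euc n)) (hK : IsConvexBody K)
    (L : AddSubgroup (Euc n))
    (f : ℝ) (hf : 0 < f)
    (hflat : ∀ C : Set (Euc n), IsConvexBody C →
      f ≤ lambdaOne (polarBody (C - C)) (dualLattice L) →
      (C ∩ (L : Set (Euc n))).Nonempty)
    (y : Euc n) (hy : y ∈ dualLattice L) (hy0 : y ≠ 0)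
    (hyshort : gauge (polarBody (K - K)) y ≤
      lambdaOne (polarBody (K - K)) (dualLattice L) + 1) :
    (K ∩ (L : Set (Euc n))).Nonempty →
      ∃ x ∈ K ∩ (L : Set (Euc n)),
        ⟪y, x⟫ ≤ sInf ((fun z => ⟪y, z⟫) '' K) + f + 1 := by
  rintro ⟨x₀, hx₀⟩
  have hKne : K.Nonempty := hK.2.2.mono interior_subset
  have hcont : Continuous fun z : Euc n => ⟪y, z⟫ := by fun_prop
  obtain ⟨_, ⟨z₀, hz₀, rfl⟩, hz₀min⟩ := (hK.2.1.image hcont).exists_isLeast (hKne.image _)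
  obtain ⟨_, ⟨z₁, hz₁, rfl⟩, hz₁max⟩ := (hK.2.1.image hcont).exists_isGreatest (hKne.image _)
  rw [IsLeast.csInf_eq ⟨mem_image_of_mem _ hz₀, hz₀min⟩]
  set W := ⟪y, z₁ - z₀⟫
  have hW : ∀ a ∈ K, ⟪y, a - z₀⟫ ≤ W := fun a ha => by
    simp only [W, inner_sub_right]; linarith [hz₁max (mem_image_of_mem _ ha)]
  rcases le_or_gt W (f + 1) with hWf | hWf
  · have hx₀W := hW x₀ hx₀.1
    rw [inner_sub_right] at hx₀W
    exact ⟨x₀, hx₀, by linarith⟩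
  set s := (f + 1) / W
  have hs : s ∈ Ioo (0 : ℝ) 1 :=
    ⟨div_pos (by linarith) (by linarith), (div_lt_one (by linarith)).2 hWf⟩
  have hsW : s * W = f + 1 := div_mul_cancel₀ _ (by linarith)
  have hKC := image_homothety_subset_inter_halfSpace hK.1 hz₀ (Ioo_subset_Icc_self hs) hW
  have hC := hK.inter_halfSpace_le hz₀ (Ioo_subset_Ioc_self hs) hW
  have hwidth : W ≤ gauge (polarBody (K - K)) y :=
    inner_le_gauge_polarBody (hK.2.1.isBounded.sub hK.2.1.isBounded) (sub_mem_sub hz₁ hz₀)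
  have hscale := mul_lambdaOne_polarBody_le hs.1
    (smul_sub_subset_image_homothety_sub.trans (sub_subset_sub hKC hKC))
    (hC.2.1.isBounded.sub hC.2.1.isBounded) ⟨y, hy, hy0⟩
  obtain ⟨x, ⟨hxK, hxC⟩, hxL⟩ := hflat _ hC (by nlinarith [hs.2])
  exact ⟨x, ⟨hxK, hxL⟩, by simp only [mem_ofPred_eq, hsW] at hxC; linarith⟩

theorem exists_lattice_point_in_slab_of_flatness
    {n : ℕ} (K : Set (Euc n)) (hK : IsConvexBody K)
    (L : AddSubgroup (Euc n)) (hdisc : DiscreteTopology L)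
    (hfull : Submodule.span ℝ (L : Set (Euc n)) = ⊤)
    (f : ℝ) (hf : 0 < f)
    (hflat : ∀ C : Set (Euc n), IsConvexBody C →
      f ≤ lambdaOne (polarBody (C - C)) (dualLattice L) →
      (C ∩ (L : Set (Euc n))).Nonempty)
    (y : Euc n) (hy : y ∈ dualLattice L) (hy0 : y ≠ 0)
    (hyshort : gauge (polarBody (K - K)) y ≤
      lambdaOne (polarBody (K - K)) (dualLattice L) + 1) :
    (K ∩ (L : Set (Euc n))).Nonempty →
      ∃ x ∈ K ∩ (L : Set (Euc n)),
        ⟪y, x⟫ ≤ sInf ((fun z => ⟪y, z⟫) '' K) + f + 1 :=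
  exists_lattice_point_in_slab_of_flatness_general K hK L f hf hflat y hy hy0 hyshort

end
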